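/- Let C be a commutative K-algebra that is formally smooth over K, and let A be a commutative K[[ℏ]]-algebra that is flat over K[[ℏ]] and ℏ-adically complete, together with a K-algebra isomorphism ψ : A/ℏA → C. Then there exists an isomorphism of K[[ℏ]]-algebras Φ : C[[ℏ]] → A (where C[[ℏ]] is the power series algebra over C with its natural K[[ℏ]]-algebra structure) such that the composite of Φ with the projection A → A/ℏA and with ψ equals the map C[[ℏ]] → C given by reduction modulo ℏ. -/

import Mathlib

/-!
Formal smoothness of `C`, together with the `ℏ`-adic completeness of `A`, lifts `ψ⁻¹` to a
`K`-algebra section `σ : C → A`. The evaluation `∑ cᵢ ℏⁱ ↦ ∑ σ(cᵢ) ℏⁱ` is then a well-defined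
`K[[ℏ]]`-algebra map `C[[ℏ]] → A`, obtained from the compatible truncated evaluations modulo `ℏⁿ`.
It is injective because `ℏ` is a non-zero-divisor on the flat `K[[ℏ]]`-module `A`, so constant
terms can be peeled off one at a time, and surjective because every element of `A` can be expanded
`ℏ`-adically digit by digit through `σ`.
-/

noncomputable section

universe u v

open scoped Polynomial PowerSeries

theorem IsHausdorff.eq_of_forall_sub_mem_pow {S : Type*} [CommRing S] {I : Ideal S}
    [IsHausdorff I S] {x y : S} (h : ∀ n, x - y ∈ I ^ n) : x = y := by
  rw [IsHausdorff.eq_iff_smodEq (I := I)]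
  intro n
  simpa [SModEq.sub_mem] using h n

namespace Polynomial

variable {R A : Type*} [CommRing R] [CommRing A] (σ : R →+* A) (a : A)

theorem mk_eval₂_eq_of_X_pow_dvd_sub {n : ℕ} {p q : R[X]} (h : X ^ n ∣ p - q) :
    Ideal.Quotient.mk (Ideal.span {a} ^ n) (p.eval₂ σ a)
      = Ideal.Quotient.mk (Ideal.span {a} ^ n) (q.eval₂ σ a) := by
  obtain ⟨r, hr⟩ := h
  rw [Ideal.Quotient.eq, ← eval₂_sub, hr, eval₂_mul, eval₂_X_pow, Ideal.span_singleton_pow]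
  exact Ideal.mul_mem_right _ _ (Ideal.mem_span_singleton_self _)

end Polynomial

namespace PowerSeries

variable {R : Type*} [CommRing R]

theorem X_pow_dvd_trunc_coe_sub (n : ℕ) (p : R[X]) :
    Polynomial.X ^ n ∣ trunc n (p : R⟦X⟧) - p := by
  rw [Polynomial.X_pow_dvd_iff]
  intro d hd
  simp [coeff_trunc, hd]

theorem X_pow_dvd_trunc_mul_sub (n : ℕ) (f g : R⟦X⟧) :
    Polynomial.X ^ n ∣ trunc n (f * g) - trunc n f * trunc n g := by
  rw [← trunc_trunc_mul_trunc, ← Polynomial.coe_mul]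
  exact X_pow_dvd_trunc_coe_sub n _

theorem X_pow_dvd_trunc_sub_trunc {m n : ℕ} (h : m ≤ n) (f : R⟦X⟧) :
    Polynomial.X ^ m ∣ trunc n f - trunc m f := by
  rw [dvd_sub_comm]
  simpa only [trunc_trunc_of_le f h] using X_pow_dvd_trunc_coe_sub m (trunc n f)

variable {A : Type*} [CommRing A] (σ : R →+* A) (a : A)

def eval₂ModPow (n : ℕ) : R⟦X⟧ →+* A ⧸ Ideal.span {a} ^ n where
  toFun f := Ideal.Quotient.mk _ ((trunc n f).eval₂ σ a)
  map_one' := by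
    rw [← Polynomial.coe_one, Polynomial.mk_eval₂_eq_of_X_pow_dvd_sub σ a
      (X_pow_dvd_trunc_coe_sub n 1), Polynomial.eval₂_one, map_one]
  map_mul' f g := by
    rw [Polynomial.mk_eval₂_eq_of_X_pow_dvd_sub σ a (X_pow_dvd_trunc_mul_sub n f g),
      Polynomial.eval₂_mul, map_mul]
  map_zero' := by simp
  map_add' f g := by simp [Polynomial.eval₂_add]

theorem factorPow_comp_eval₂ModPow {m n : ℕ} (h : m ≤ n) :
    (Ideal.Quotient.factorPow _ h).comp (eval₂ModPow σ a n) = eval₂ModPow σ a m := by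
  ext f
  exact Polynomial.mk_eval₂_eq_of_X_pow_dvd_sub σ a (X_pow_dvd_trunc_sub_trunc h f)

theorem mk_span_apply_eq_mk_constantCoeff {φ : R⟦X⟧ →+* A} (hφ : φ X = a) (f : R⟦X⟧) :
    Ideal.Quotient.mk (Ideal.span {a}) (φ f)
      = Ideal.Quotient.mk (Ideal.span {a}) (φ (C (constantCoeff f))) := by
  rw [Ideal.Quotient.eq]
  nth_rw 1 [eq_X_mul_shift_add_const f]
  rw [map_add, map_mul, hφ, add_sub_cancel_right]
  exact Ideal.mul_mem_right _ _ (Ideal.mem_span_singleton_self a)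

theorem injective_of_isSMulRegular {φ : R⟦X⟧ →+* A} (hφ : φ X = a) (ha : IsSMulRegular A a)
    (hC : Function.Injective fun r => Ideal.Quotient.mk (Ideal.span {a}) (φ (C r))) :
    Function.Injective φ := by
  have hconst : ∀ f, φ f = 0 → constantCoeff f = 0 := fun f hf =>
    hC (by simpa [hf, eq_comm] using mk_span_apply_eq_mk_constantCoeff a hφ f)
  have hcoeff : ∀ n f, φ f = 0 → coeff n f = 0 := by
    intro n
    induction n with
    | zero => intro f hf; simpa using hconst f hf
    | succ n ih =>
      intro f hf
      have hf' := hf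
      rw [eq_X_mul_shift_add_const f, hconst f hf, map_zero, add_zero, map_mul, hφ] at hf'
      rw [← ih _ (ha.right_eq_zero_of_smul hf'), coeff_mk]
  rw [injective_iff_map_eq_zero]
  exact fun f hf => ext fun n => by simpa using hcoeff n f hf

theorem ringHom_ext_of_isHausdorff [IsHausdorff (Ideal.span {a}) A] {φ ψ : R⟦X⟧ →+* A}
    (hφ : φ X = a) (hψ : ψ X = a) (hC : φ.comp C = ψ.comp C) : φ = ψ := by
  have hpoly (p : R[X]) : φ p = ψ p := by
    have : φ.comp Polynomial.coeToPowerSeries.ringHom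
        = ψ.comp Polynomial.coeToPowerSeries.ringHom :=
      Polynomial.ringHom_ext (fun r => by simpa using congr($hC r)) (by simp [hφ, hψ])
    exact congr($this p)
  ext f
  refine IsHausdorff.eq_of_forall_sub_mem_pow (I := Ideal.span {a}) fun n => ?_
  rw [eq_X_pow_mul_shift_add_trunc n f]
  simp only [map_add, map_mul, map_pow, hφ, hψ]
  rw [hpoly, add_sub_add_right_eq_sub, ← mul_sub, Ideal.span_singleton_pow]
  exact Ideal.mul_mem_right _ _ (Ideal.mem_span_singleton_self _)

variable [IsAdicComplete (Ideal.span {a}) A]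

/-- `∑ rᵢ Xⁱ ↦ ∑ σ(rᵢ) aⁱ`, the sum converging `a`-adically. -/
def adicEval₂ : R⟦X⟧ →+* A :=
  ((AdicCompletion.ofAlgEquiv (Ideal.span {a})).symm : AdicCompletion _ A →+* A).comp
    (AdicCompletion.liftRingHom _ (eval₂ModPow σ a) (factorPow_comp_eval₂ModPow σ a))

theorem mk_adicEval₂ (n : ℕ) (f : R⟦X⟧) :
    Ideal.Quotient.mk (Ideal.span {a} ^ n) (adicEval₂ σ a f)
      = Ideal.Quotient.mk (Ideal.span {a} ^ n) ((trunc n f).eval₂ σ a) := by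
  simp [adicEval₂, eval₂ModPow]

theorem adicEval₂_coe (p : R[X]) : adicEval₂ σ a p = p.eval₂ σ a :=
  IsHausdorff.eq_of_forall_sub_mem_pow fun n => by
    rw [← Ideal.Quotient.eq, mk_adicEval₂]
    exact Polynomial.mk_eval₂_eq_of_X_pow_dvd_sub σ a (X_pow_dvd_trunc_coe_sub n p)

@[simp]
theorem adicEval₂_X : adicEval₂ σ a X = a := by
  simpa using adicEval₂_coe σ a Polynomial.X

@[simp]
theorem adicEval₂_C (r : R) : adicEval₂ σ a (C r) = σ r := by
  simpa using adicEval₂_coe σ a (Polynomial.C r)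

theorem adicEval₂_surjective
    (hσ : Function.Surjective fun r => Ideal.Quotient.mk (Ideal.span {a}) (σ r)) :
    Function.Surjective (adicEval₂ σ a) := by
  intro x
  have hdigit (y : A) : ∃ r z, y = σ r + a * z := by
    obtain ⟨r, hr⟩ := hσ (Ideal.Quotient.mk _ y)
    obtain ⟨z, hz⟩ := Ideal.mem_span_singleton'.mp (Ideal.Quotient.eq.mp hr.symm)
    exact ⟨r, z, by rw [mul_comm, hz, add_sub_cancel]⟩
  choose digit rest hy using hdigit
  set f : R⟦X⟧ := mk fun k => digit (rest^[k] x)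
  have hpartial (n : ℕ) : x - (trunc n f).eval₂ σ a = a ^ n * rest^[n] x := by
    induction n with
    | zero => simp
    | succ n ih =>
      rw [trunc_succ, Polynomial.eval₂_add, Polynomial.eval₂_monomial, coeff_mk,
        Function.iterate_succ_apply', ← sub_sub, ih]
      linear_combination a ^ n * hy (rest^[n] x)
  refine ⟨f, IsHausdorff.eq_of_forall_sub_mem_pow (I := Ideal.span {a}) fun n => ?_⟩
  rw [← Ideal.Quotient.eq, mk_adicEval₂, Ideal.Quotient.eq, Ideal.span_singleton_pow, ← neg_sub,
    hpartial n, neg_mem_iff]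
  exact Ideal.mul_mem_right _ _ (Ideal.mem_span_singleton_self _)

end PowerSeries

theorem statement13_general (K : Type u) [Field K]
    (C : Type u) [CommRing C] [Algebra K C] [Algebra.FormallySmooth K C]
    (A : Type v) [CommRing A] [Algebra (PowerSeries K) A]
    [Algebra K A] [IsScalarTower K (PowerSeries K) A]
    [Module.Flat (PowerSeries K) A]
    [IsAdicComplete (Ideal.span {(PowerSeries.X : PowerSeries K)}) A]
    (ψ : (A ⧸ Ideal.span {algebraMap (PowerSeries K) A PowerSeries.X}) ≃ₐ[K] C) :
    ∃ Φ : PowerSeries C ≃ₐ[PowerSeries K] A,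
      ∀ f : PowerSeries C,
        ψ (Ideal.Quotient.mk (Ideal.span {algebraMap (PowerSeries K) A PowerSeries.X})
            (Φ f))
          = (PowerSeries.constantCoeff : PowerSeries C →+* C) f := by
  have : IsAdicComplete (Ideal.span {algebraMap (PowerSeries K) A PowerSeries.X}) A := by
    rw [← Set.image_singleton, ← Ideal.map_span, IsAdicComplete.map_algebraMap_iff]
    infer_instance
  obtain ⟨σ, hσ⟩ := Algebra.FormallySmooth.exists_mkₐ_comp_eq_of_isAdicComplete
    (ψ.symm : C →ₐ[K] A ⧸ Ideal.span {algebraMap (PowerSeries K) A PowerSeries.X})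
  have hmkσ (c : C) : Ideal.Quotient.mk _ (σ c) = ψ.symm c := congr($hσ c)
  let Φ := PowerSeries.adicEval₂ (σ : C →+* A) (algebraMap (PowerSeries K) A PowerSeries.X)
  have hΦX : Φ PowerSeries.X = algebraMap (PowerSeries K) A PowerSeries.X :=
    PowerSeries.adicEval₂_X _ _
  have hΦ_alg : Φ.comp (algebraMap _ _) = algebraMap (PowerSeries K) A := by
    refine PowerSeries.ringHom_ext_of_isHausdorff _ ?_ rfl ?_
    · simp [PowerSeries.algebraMap_apply'', hΦX]
    · ext k
      have hk : algebraMap (PowerSeries K) A (PowerSeries.C k) = algebraMap K A k := by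
        rw [← PowerSeries.algebraMap_eq, ← IsScalarTower.algebraMap_apply]
      simp [PowerSeries.algebraMap_apply'', Φ, hk]
  have hinj : Function.Injective Φ :=
    PowerSeries.injective_of_isSMulRegular _ hΦX
      (IsSMulRegular.of_flat (IsSMulRegular.of_ne_zero PowerSeries.X_ne_zero))
      (by simpa [Φ, hmkσ] using ψ.symm.injective)
  have hsurj : Function.Surjective Φ :=
    PowerSeries.adicEval₂_surjective _ _ (by simpa [hmkσ] using ψ.symm.surjective)
  refine ⟨AlgEquiv.ofBijective { Φ with commutes' := fun g => congr($hΦ_alg g) } ⟨hinj, hsurj⟩,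
    fun f => ?_⟩
  change ψ (Ideal.Quotient.mk _ (Φ f)) = _
  rw [PowerSeries.mk_span_apply_eq_mk_constantCoeff _ hΦX, PowerSeries.adicEval₂_C,
    RingHom.coe_coe, hmkσ, AlgEquiv.apply_symm_apply]

/-- let `C` be a formally smooth commutative `K`-algebra and `A` a
commutative `K[[ℏ]]`-algebra, flat and `ℏ`-adically complete, with a `K`-algebra
isomorphism `ψ : A/ℏA ≃ C`.  Then there is a `K[[ℏ]]`-algebra isomorphism
`Φ : C[[ℏ]] ≃ A` compatible with `ψ` and reduction modulo `ℏ` (the latter being the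
constant coefficient map `C[[ℏ]] → C`). -/
theorem statement13 (K : Type u) [Field K] [CharZero K]
    (C : Type u) [CommRing C] [Algebra K C] [Algebra.FormallySmooth K C]
    (A : Type v) [CommRing A] [Algebra (PowerSeries K) A]
    [Algebra K A] [IsScalarTower K (PowerSeries K) A]
    [Module.Flat (PowerSeries K) A]
    [IsAdicComplete (Ideal.span {(PowerSeries.X : PowerSeries K)}) A]
    (ψ : (A ⧸ Ideal.span {algebraMap (PowerSeries K) A PowerSeries.X}) ≃ₐ[K] C) :
    ∃ Φ : PowerSeries C ≃ₐ[PowerSeries K] A,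
      ∀ f : PowerSeries C,
        ψ (Ideal.Quotient.mk (Ideal.span {algebraMap (PowerSeries K) A PowerSeries.X})
            (Φ f))
          = (PowerSeries.constantCoeff : PowerSeries C →+* C) f :=
  statement13_general K C A ψ
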